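/- Let ψ be a pure n-qubit state and define the Bell-difference POVM Π_a = 2^{-2n} Σ_{x ∈ Z_2^{2n}} (-1)^{[a,x]} W_x^{⊗4}. Then tr(Π_a ψ^{⊗4}) = Σ_x p_ψ(x) p_ψ(x + a), where p_ψ(x) = 2^{-n}|tr(ψ W_x)|^2. -/

import Mathlib

open scoped BigOperators ComplexConjugate
open Finset Matrix

noncomputable section

/-- The primitive `d`-th root of unity `ω = e^{2πi/d}`. -/
def omg (d : ℕ) : ℂ := Complex.exp (2 * Real.pi * Complex.I / d)

/-- The phase `τ = (-1)^d e^{iπ/d} = e^{iπ(d²+1)/d}`, with `τ² = ω`. -/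
def tau (d : ℕ) : ℂ := Complex.exp (Real.pi * Complex.I * (d ^ 2 + 1) / d)

/-- `ω^k` for `k : ZMod d` (well-defined since `ω^d = 1`). -/
def omgPow (d : ℕ) [NeZero d] (k : ZMod d) : ℂ := omg d ^ k.val

/-- Integer dot product of phase-space component vectors, via canonical representatives. -/
def dotv {d n : ℕ} [NeZero d] (p q : Fin n → ZMod d) : ℕ :=
  ∑ i, (p i).val * (q i).val

/-- The standard symplectic form `[(p,q),(p',q')] = p·q' - q·p'` on `(ZMod d)^{2n}`. -/
def symp {d n : ℕ} [NeZero d] (x y : (Fin n → ZMod d) × (Fin n → ZMod d)) : ZMod d :=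
  ∑ i, (x.1 i * y.2 i - x.2 i * y.1 i)

/-- The Weyl operator `W_{p,q} = τ^{-p·q} Z^p X^q` on `(ℂ^d)^{⊗n}`, with matrix
entries `⟨a|W_{p,q}|b⟩ = τ^{-p·q} ω^{p·a} δ_{a,b+q}`. -/
def Weyl (d n : ℕ) [NeZero d] (x : (Fin n → ZMod d) × (Fin n → ZMod d)) :
    Matrix (Fin n → ZMod d) (Fin n → ZMod d) ℂ :=
  Matrix.of fun a b =>
    tau d ^ (-(dotv x.1 x.2 : ℤ)) * omg d ^ dotv x.1 a * (if a = b + x.2 then 1 else 0)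

/-- The rank-one projector `|ψ⟩⟨ψ|` associated to a vector `ψ`. -/
def outer (d n : ℕ) [NeZero d] (ψ : (Fin n → ZMod d) → ℂ) :
    Matrix (Fin n → ZMod d) (Fin n → ZMod d) ℂ :=
  Matrix.of fun a b => ψ a * conj (ψ b)

/-- The standard inner product `⟨φ, ψ⟩ = ∑ conj(φ a) ψ a`. -/
def dotc {d n : ℕ} [NeZero d] (φ ψ : (Fin n → ZMod d) → ℂ) : ℂ :=
  ∑ a, conj (φ a) * ψ a

/-- `ψ` is a pure stabilizer state: it is a unit vector which is a simultaneous
eigenvector of the Weyl operators `W_x` for `x` ranging over a Lagrangian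
(maximal totally isotropic, cardinality `d^n`) subspace of phase space. -/
def IsStabilizerState (d n : ℕ) [NeZero d] (ψ : (Fin n → ZMod d) → ℂ) : Prop :=
  dotc ψ ψ = 1 ∧
  ∃ M : Submodule (ZMod d) ((Fin n → ZMod d) × (Fin n → ZMod d)),
    (∀ x ∈ M, ∀ y ∈ M, symp x y = 0) ∧ Nat.card M = d ^ n ∧
    ∀ x ∈ M, ∃ c : ℂ, (Weyl d n x).mulVec ψ = c • ψ

/-- The phase-space point operator `A_x = d^{-n} ∑_y ω^{-[x,y]} W_y†`. -/
def PhasePoint (d n : ℕ) [NeZero d] (x : (Fin n → ZMod d) × (Fin n → ZMod d)) :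
    Matrix (Fin n → ZMod d) (Fin n → ZMod d) ℂ :=
  ((d : ℂ) ^ n)⁻¹ • (∑ y : ((Fin n → ZMod d) × (Fin n → ZMod d)),
    omgPow d (-(symp x y)) • (Weyl d n y)ᴴ)

/-- The characteristic distribution `p_ψ(x) = d^{-n} |tr(W_x |ψ⟩⟨ψ|)|²`. -/
def pdist (d n : ℕ) [NeZero d] (ψ : (Fin n → ZMod d) → ℂ)
    (x : (Fin n → ZMod d) × (Fin n → ZMod d)) : ℝ :=
  ((d : ℝ) ^ n)⁻¹ * ‖(Weyl d n x * outer d n ψ).trace‖ ^ 2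

/-- The Wigner function `w_ψ(x) = d^{-n} tr(A_x |ψ⟩⟨ψ|)` (real part). -/
def wigner (d n : ℕ) [NeZero d] (ψ : (Fin n → ZMod d) → ℂ)
    (x : (Fin n → ZMod d) × (Fin n → ZMod d)) : ℝ :=
  ((d : ℝ) ^ n)⁻¹ * ((PhasePoint d n x * outer d n ψ).trace).re

end

/-- The Bell-difference-sampling POVM element
`Π_a = 2^{-2n} ∑_x (-1)^{[a,x]} W_x^{⊗4}` on four copies of `n` qubits. -/
noncomputable def BellDiff (n : ℕ) (a : (Fin n → ZMod 2) × (Fin n → ZMod 2)) :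
    Matrix (Fin 4 → (Fin n → ZMod 2)) (Fin 4 → (Fin n → ZMod 2)) ℂ :=
  ((2 : ℂ) ^ (2 * n))⁻¹ • (∑ x : ((Fin n → ZMod 2) × (Fin n → ZMod 2)),
    ((-1 : ℂ) ^ (symp a x).val) •
      Matrix.of fun p q => ∏ j : Fin 4, Weyl 2 n x (p j) (q j))

/-- The fourth tensor power `|ψ⟩⟨ψ|^{⊗4}` of a pure `n`-qubit state. -/
noncomputable def outer4 (n : ℕ) (ψ : (Fin n → ZMod 2) → ℂ) :
    Matrix (Fin 4 → (Fin n → ZMod 2)) (Fin 4 → (Fin n → ZMod 2)) ℂ :=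
  Matrix.of fun p q => ∏ j : Fin 4, (ψ (p j) * conj (ψ (q j)))

/- ===== auxiliary development ===== -/

section Aux

noncomputable def sg (z : ZMod 2) : ℂ := (-1) ^ z.val

lemma sg_zero : sg 0 = 1 := by norm_num [sg, show (0 : ZMod 2).val = 0 from rfl]

lemma sg_one : sg 1 = -1 := by norm_num [sg, show (1 : ZMod 2).val = 1 from rfl]

lemma two_eq_zero' : (1 + 1 : ZMod 2) = 0 := rfl

lemma sg_cases : ∀ z : ZMod 2, z = 0 ∨ z = 1 := by decide

lemma sg_add (y z : ZMod 2) : sg (y + z) = sg y * sg z := by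
  rcases sg_cases y with h | h <;> rcases sg_cases z with h' | h' <;>
    subst h <;> subst h' <;> simp [sg_zero, sg_one, two_eq_zero']

lemma sg_mul_self (z : ZMod 2) : sg z * sg z = 1 := by
  rcases sg_cases z with h | h <;> subst h <;> simp [sg_zero, sg_one]

lemma sg_sq (z : ZMod 2) : sg z ^ 2 = 1 := by rw [sq, sg_mul_self]

lemma conj_sg (z : ZMod 2) : conj (sg z) = sg z := by simp [sg]

lemma sg_natCast (m : ℕ) : sg (m : ZMod 2) = (-1) ^ m := by
  unfold sg
  rw [ZMod.val_natCast]
  conv_rhs => rw [← Nat.mod_add_div m 2, pow_add, pow_mul]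
  norm_num

def dz {n : ℕ} (p q : Fin n → ZMod 2) : ZMod 2 := ∑ i, p i * q i

lemma dz_comm {n : ℕ} (p q : Fin n → ZMod 2) : dz p q = dz q p := by
  simp [dz, mul_comm]

lemma dz_add_right {n : ℕ} (p q r : Fin n → ZMod 2) :
    dz p (q + r) = dz p q + dz p r := by
  simp [dz, mul_add, Finset.sum_add_distrib]

lemma dz_add_left {n : ℕ} (p q r : Fin n → ZMod 2) :
    dz (p + q) r = dz p r + dz q r := by
  simp [dz, add_mul, Finset.sum_add_distrib]

lemma dotv_dz {n : ℕ} (p q : Fin n → ZMod 2) :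
    ((dotv p q : ℕ) : ZMod 2) = dz p q := by
  unfold dotv
  push_cast [ZMod.natCast_val, ZMod.cast_id]
  rfl

lemma sg_sum {n : ℕ} (f : Fin n → ZMod 2) :
    sg (∑ i, f i) = ∏ i, sg (f i) := by
  classical
  induction (Finset.univ : Finset (Fin n)) using Finset.cons_induction with
  | empty => simp [sg_zero]
  | cons a s ha ih => rw [Finset.sum_cons, Finset.prod_cons, sg_add, ih]

lemma sum_sg_single (c : ZMod 2) :
    (∑ z : ZMod 2, sg (z * c)) = if c = 0 then 2 else 0 := by
  have huniv : (Finset.univ : Finset (ZMod 2)) = {0, 1} := by decide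
  rw [huniv]
  rcases sg_cases c with h | h <;> subst h <;>
    simp [sg_zero, sg_one, show ((0:ZMod 2) ∉ ({1} : Finset (ZMod 2))) from by decide,
      Finset.sum_insert, Finset.sum_singleton]

lemma sum_sg_dz {n : ℕ} (c : Fin n → ZMod 2) :
    (∑ p : Fin n → ZMod 2, sg (dz p c)) = if c = 0 then 2 ^ n else 0 := by
  classical
  have h : ∀ p : Fin n → ZMod 2, sg (dz p c) = ∏ i, sg (p i * c i) := fun p => sg_sum _
  simp_rw [h]
  rw [← Fintype.piFinset_univ, ← Finset.prod_univ_sum (fun _ => Finset.univ)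
    (fun i z => sg (z * c i))]
  simp_rw [sum_sg_single]
  by_cases hc : c = 0
  · subst hc; simp
  · rw [if_neg hc]
    obtain ⟨i, hi⟩ : ∃ i, c i ≠ 0 := by
      by_contra hcon; push_neg at hcon; exact hc (funext hcon)
    exact Finset.prod_eq_zero (Finset.mem_univ i) (by rw [if_neg hi])

/- vector helpers in characteristic two -/

lemma vadd_self {n : ℕ} (v : Fin n → ZMod 2) : v + v = 0 := by
  funext i
  exact (by decide : ∀ x : ZMod 2, x + x = 0) (v i)

lemma vadd_cancel {n : ℕ} (v w : Fin n → ZMod 2) : v + (v + w) = w := by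
  funext i
  exact (by decide : ∀ x y : ZMod 2, x + (x + y) = y) (v i) (w i)

lemma veq_add_iff {n : ℕ} (a b q : Fin n → ZMod 2) : a = b + q ↔ b = a + q := by
  constructor <;> rintro rfl <;> rw [add_assoc, vadd_self, add_zero]

lemma vzero_iff {n : ℕ} (u c e : Fin n → ZMod 2) : u + c + e = 0 ↔ e = c + u := by
  have hpt : ∀ x y z : ZMod 2, (x + y + z = 0 ↔ z = y + x) := by decide
  constructor
  · intro h; funext i; exact (hpt (u i) (c i) (e i)).mp (congrFun h i)
  · intro h; funext i; exact (hpt (u i) (c i) (e i)).mpr (congrFun h i)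

lemma vsum_aux {n : ℕ} (c b e : Fin n → ZMod 2) : (c + b) + (c + e) = e + b := by
  funext i
  exact (by decide : ∀ x y z : ZMod 2, (x + y) + (x + z) = z + y) (c i) (b i) (e i)

/- special constants -/

lemma omg_two : omg 2 = -1 := by
  have h : (2 * (Real.pi : ℂ) * Complex.I / ((2 : ℕ) : ℂ)) = Real.pi * Complex.I := by
    push_cast; ring
  rw [omg, h, Complex.exp_pi_mul_I]

lemma tau_two : tau 2 = Complex.I := by
  have h : ((Real.pi : ℂ) * Complex.I * (((2:ℕ) : ℂ) ^ 2 + 1) / ((2:ℕ) : ℂ))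
      = (↑(Real.pi / 2) : ℂ) * Complex.I + 2 * Real.pi * Complex.I := by
    push_cast; ring
  rw [tau, h, Complex.exp_add, Complex.exp_two_pi_mul_I, mul_one, Complex.exp_mul_I,
    ← Complex.ofReal_cos, ← Complex.ofReal_sin, Real.cos_pi_div_two, Real.sin_pi_div_two]
  simp

lemma I_zpow_pow_four (z : ℤ) : (Complex.I ^ z) ^ (4 : ℕ) = 1 := by
  rw [← zpow_natCast (Complex.I ^ z) 4, ← _root_.zpow_mul]
  have h4 : z * ((4:ℕ):ℤ) = 4 * z := by push_cast; ring
  rw [h4, _root_.zpow_mul]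
  norm_num [show (Complex.I : ℂ) ^ (4:ℤ) = 1 by
    rw [show (4:ℤ) = ((4:ℕ):ℤ) by norm_num, zpow_natCast]
    simp [pow_succ, Complex.I_mul_I]]

lemma abs_I_zpow (z : ℤ) : ‖Complex.I ^ z‖ = 1 := by
  rw [norm_zpow, Complex.norm_I, _root_.one_zpow]

/- the function g and its properties -/

noncomputable def gfun {n : ℕ} (ψ : (Fin n → ZMod 2) → ℂ)
    (x : (Fin n → ZMod 2) × (Fin n → ZMod 2)) : ℂ :=
  ∑ a, sg (dz x.1 a) * (conj (ψ a) * ψ (a + x.2))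

noncomputable def GC {n : ℕ} (ψ : (Fin n → ZMod 2) → ℂ)
    (x : (Fin n → ZMod 2) × (Fin n → ZMod 2)) : ℂ :=
  gfun ψ x * conj (gfun ψ x)

lemma traceW {n : ℕ} (ψ : (Fin n → ZMod 2) → ℂ)
    (x : (Fin n → ZMod 2) × (Fin n → ZMod 2)) :
    (Weyl 2 n x * outer 2 n ψ).trace
      = Complex.I ^ (-(dotv x.1 x.2 : ℤ)) * gfun ψ x := by
  simp only [Matrix.trace, Matrix.diag, Matrix.mul_apply, Weyl, outer, Matrix.of_apply]
  rw [gfun, Finset.mul_sum]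
  refine Finset.sum_congr rfl fun a _ => ?_
  rw [Finset.sum_eq_single (a + x.2)]
  · rw [if_pos (by rw [add_assoc, vadd_self, add_zero]), tau_two]
    have : omg 2 ^ dotv x.1 a = sg (dz x.1 a) := by
      rw [omg_two, ← sg_natCast, dotv_dz]
    rw [this]; ring
  · intro b _ hb
    rw [if_neg, mul_zero, zero_mul]
    intro hab
    exact hb ((veq_add_iff a b x.2).mp hab)
  · intro h; exact absurd (Finset.mem_univ _) h

lemma conj_gfun {n : ℕ} (ψ : (Fin n → ZMod 2) → ℂ)
    (x : (Fin n → ZMod 2) × (Fin n → ZMod 2)) :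
    conj (gfun ψ x) = sg (dz x.1 x.2) * gfun ψ x := by
  rw [gfun, map_sum, Finset.mul_sum]
  have hL : ∀ a, conj (sg (dz x.1 a) * (conj (ψ a) * ψ (a + x.2)))
      = sg (dz x.1 a) * (ψ a * conj (ψ (a + x.2))) := by
    intro a; rw [_root_.map_mul, conj_sg, _root_.map_mul, Complex.conj_conj]
  simp_rw [hL]
  rw [← Equiv.sum_comp (Equiv.addRight x.2)
    (fun a => sg (dz x.1 a) * (ψ a * conj (ψ (a + x.2))))]
  refine Finset.sum_congr rfl fun b _ => ?_
  have he : (Equiv.addRight x.2) b = b + x.2 := rfl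
  rw [he, add_assoc, vadd_self, add_zero, dz_add_right, sg_add]
  ring

lemma GC_sq {n : ℕ} (ψ : (Fin n → ZMod 2) → ℂ)
    (x : (Fin n → ZMod 2) × (Fin n → ZMod 2)) :
    GC ψ x ^ 2 = gfun ψ x ^ 4 := by
  rw [GC, mul_pow, conj_gfun, mul_pow, sg_sq, one_mul]
  ring

lemma trace4 {n : ℕ} (ψ : (Fin n → ZMod 2) → ℂ)
    (x : (Fin n → ZMod 2) × (Fin n → ZMod 2)) :
    ((Weyl 2 n x * outer 2 n ψ).trace) ^ 4 = GC ψ x ^ 2 := by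
  rw [traceW, mul_pow, I_zpow_pow_four, one_mul, GC_sq]

lemma sg_symp {n : ℕ} (a x : (Fin n → ZMod 2) × (Fin n → ZMod 2)) :
    ((-1 : ℂ) ^ (symp a x).val) = sg (dz a.1 x.2) * sg (dz a.2 x.1) := by
  have hsub : ∀ u v : ZMod 2, u - v = u + v := by decide
  have h : symp a x = dz a.1 x.2 + dz a.2 x.1 := by
    rw [symp, dz, dz]
    simp_rw [hsub]
    rw [Finset.sum_add_distrib]
  show sg (symp a x) = _
  rw [h, sg_add]

end Aux

section Core

variable {n : ℕ}

lemma conj_gfun' (ψ : (Fin n → ZMod 2) → ℂ)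
    (b : (Fin n → ZMod 2) × (Fin n → ZMod 2)) :
    conj (gfun ψ b) = ∑ e, sg (dz b.1 e) * (ψ e * conj (ψ (e + b.2))) := by
  rw [gfun, map_sum]
  refine Finset.sum_congr rfl fun e _ => ?_
  rw [_root_.map_mul, conj_sg, _root_.map_mul, Complex.conj_conj]

/-- Symplectic Fourier invariance of `GC` (purity of `|ψ⟩⟨ψ|`). -/
lemma fourier_GC (ψ : (Fin n → ZMod 2) → ℂ)
    (b : (Fin n → ZMod 2) × (Fin n → ZMod 2)) :
    ∑ x : (Fin n → ZMod 2) × (Fin n → ZMod 2),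
      (sg (dz b.1 x.2) * sg (dz b.2 x.1)) * GC ψ x = (2:ℂ)^n * GC ψ b := by
  classical
  have step1 : ∑ x : (Fin n → ZMod 2) × (Fin n → ZMod 2),
      (sg (dz b.1 x.2) * sg (dz b.2 x.1)) * GC ψ x
      = ∑ q, ∑ c, ∑ e, (∑ p, sg (dz p (b.2 + c + e))) *
          (sg (dz b.1 q) * ((conj (ψ c) * ψ (c + q)) *
            conj (conj (ψ e) * ψ (e + q)))) := by
    rw [Fintype.sum_prod_type, Finset.sum_comm]
    refine Finset.sum_congr rfl fun q _ => ?_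
    have expand : ∀ p : Fin n → ZMod 2, GC ψ (p, q) = ∑ c, ∑ e,
        sg (dz p c) * sg (dz p e) * ((conj (ψ c) * ψ (c + q)) *
          conj (conj (ψ e) * ψ (e + q))) := by
      intro p
      rw [GC]
      have hg : gfun ψ (p, q) = ∑ c, sg (dz p c) * (conj (ψ c) * ψ (c + q)) := rfl
      rw [hg, map_sum, Finset.sum_mul_sum]
      refine Finset.sum_congr rfl fun c _ => Finset.sum_congr rfl fun e _ => ?_
      rw [_root_.map_mul, conj_sg]
      ring
    simp_rw [expand, Finset.mul_sum]
    rw [Finset.sum_comm]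
    refine Finset.sum_congr rfl fun c _ => ?_
    rw [Finset.sum_comm]
    refine Finset.sum_congr rfl fun e _ => ?_
    rw [Finset.sum_mul]
    refine Finset.sum_congr rfl fun p _ => ?_
    rw [dz_add_right, dz_add_right, sg_add, sg_add, dz_comm p b.2]
    ring
  rw [step1]
  have step2 : ∀ (q c : Fin n → ZMod 2), (∑ e, (∑ p, sg (dz p (b.2 + c + e))) *
          (sg (dz b.1 q) * ((conj (ψ c) * ψ (c + q)) *
            conj (conj (ψ e) * ψ (e + q)))))
      = (2:ℂ)^n * (sg (dz b.1 q) * ((conj (ψ c) * ψ (c + q)) *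
            conj (conj (ψ (c + b.2)) * ψ ((c + b.2) + q)))) := by
    intro q c
    simp_rw [sum_sg_dz, vzero_iff, ite_mul, zero_mul]
    rw [Finset.sum_ite_eq' Finset.univ (c + b.2)]
    simp
  rw [Finset.sum_congr rfl fun q _ => Finset.sum_congr rfl fun c _ => step2 q c]
  simp_rw [← Finset.mul_sum]
  congr 1
  simp_rw [Finset.mul_sum]
  rw [Finset.sum_comm]
  have hre : ∀ c : Fin n → ZMod 2, (∑ q, sg (dz b.1 q) * ((conj (ψ c) * ψ (c + q)) *
        conj (conj (ψ (c + b.2)) * ψ ((c + b.2) + q))))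
      = ∑ e, (sg (dz b.1 c) * (conj (ψ c) * ψ (c + b.2))) *
          (sg (dz b.1 e) * (ψ e * conj (ψ (e + b.2)))) := by
    intro c
    rw [← Equiv.sum_comp (Equiv.addLeft c) (fun q => sg (dz b.1 q) *
      ((conj (ψ c) * ψ (c + q)) * conj (conj (ψ (c + b.2)) * ψ ((c + b.2) + q))))]
    refine Finset.sum_congr rfl fun e _ => ?_
    show sg (dz b.1 (c + e)) * ((conj (ψ c) * ψ (c + (c + e))) *
      conj (conj (ψ (c + b.2)) * ψ ((c + b.2) + (c + e)))) = _
    rw [vadd_cancel, vsum_aux, dz_add_right, sg_add, _root_.map_mul,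
      Complex.conj_conj]
    ring
  simp_rw [hre]
  rw [← Finset.sum_mul_sum]
  rw [GC, conj_gfun']
  rfl

/-- Convolution identity derived from Fourier invariance. -/
lemma conv_eq (ψ : (Fin n → ZMod 2) → ℂ)
    (a : (Fin n → ZMod 2) × (Fin n → ZMod 2)) :
    ∑ x : (Fin n → ZMod 2) × (Fin n → ZMod 2), GC ψ x * GC ψ (x + a)
      = ∑ x : (Fin n → ZMod 2) × (Fin n → ZMod 2),
          (sg (dz a.1 x.2) * sg (dz a.2 x.1)) * GC ψ x ^ 2 := by
  classical
  have h2n : ((2:ℂ)^n) ≠ 0 := pow_ne_zero _ two_ne_zero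
  have hinv : ∀ b : (Fin n → ZMod 2) × (Fin n → ZMod 2), GC ψ b
      = ((2:ℂ)^n)⁻¹ * ∑ x : (Fin n → ZMod 2) × (Fin n → ZMod 2),
          (sg (dz b.1 x.2) * sg (dz b.2 x.1)) * GC ψ x := by
    intro b
    rw [fourier_GC, ← mul_assoc, inv_mul_cancel₀ h2n, one_mul]
  calc ∑ x : (Fin n → ZMod 2) × (Fin n → ZMod 2), GC ψ x * GC ψ (x + a)
      = ∑ x : (Fin n → ZMod 2) × (Fin n → ZMod 2), GC ψ x *
          (((2:ℂ)^n)⁻¹ * ∑ v : (Fin n → ZMod 2) × (Fin n → ZMod 2),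
            (sg (dz (x + a).1 v.2) * sg (dz (x + a).2 v.1)) * GC ψ v) := by
        refine Finset.sum_congr rfl fun x _ => ?_
        rw [← hinv (x + a)]
    _ = ((2:ℂ)^n)⁻¹ * ∑ v : (Fin n → ZMod 2) × (Fin n → ZMod 2),
          ((sg (dz a.1 v.2) * sg (dz a.2 v.1)) * GC ψ v) *
            ∑ x : (Fin n → ZMod 2) × (Fin n → ZMod 2),
              (sg (dz v.1 x.2) * sg (dz v.2 x.1)) * GC ψ x := by
        simp only [Finset.mul_sum]
        rw [Finset.sum_comm]
        refine Finset.sum_congr rfl fun v _ => Finset.sum_congr rfl fun x _ => ?_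
        have h1 : (x + a).1 = x.1 + a.1 := rfl
        have h2 : (x + a).2 = x.2 + a.2 := rfl
        rw [h1, h2, dz_add_left, dz_add_left, sg_add, sg_add,
          dz_comm v.1 x.2, dz_comm v.2 x.1, dz_comm a.1 v.2, dz_comm a.2 v.1]
        ring
    _ = ∑ v : (Fin n → ZMod 2) × (Fin n → ZMod 2),
          (sg (dz a.1 v.2) * sg (dz a.2 v.1)) * GC ψ v ^ 2 := by
        simp_rw [fourier_GC]
        rw [Finset.mul_sum]
        refine Finset.sum_congr rfl fun v _ => ?_
        rw [← mul_assoc, mul_comm (((2:ℂ)^n)⁻¹)]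
        field_simp

/-- Sum-product exchange for the fourth tensor power. -/
lemma sum_pow_four {α : Type*} [Fintype α] [DecidableEq α] (t : α → α → ℂ) :
    (∑ P : Fin 4 → α, ∑ Q : Fin 4 → α, ∏ j, t (P j) (Q j))
      = (∑ p, ∑ q, t p q) ^ 4 := by
  have h1 : ∀ P : Fin 4 → α, (∑ Q : Fin 4 → α, ∏ j, t (P j) (Q j))
      = ∏ j, ∑ q, t (P j) q := by
    intro P
    rw [← Fintype.piFinset_univ, ← Finset.prod_univ_sum]
  simp_rw [h1]
  rw [← Fintype.piFinset_univ,
    ← Finset.prod_univ_sum (fun _ : Fin 4 => (Finset.univ : Finset α))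
      (fun (_ : Fin 4) (p : α) => ∑ q : α, t p q)]
  rw [Finset.prod_const]
  simp

lemma trace_pow4 (ψ : (Fin n → ZMod 2) → ℂ)
    (x : (Fin n → ZMod 2) × (Fin n → ZMod 2)) :
    ((Matrix.of fun p q : Fin 4 → (Fin n → ZMod 2) => ∏ j : Fin 4, Weyl 2 n x (p j) (q j)) * outer4 n ψ).trace
      = ((Weyl 2 n x * outer 2 n ψ).trace) ^ 4 := by
  classical
  simp only [Matrix.trace, Matrix.diag, Matrix.mul_apply, Matrix.of_apply,
    outer4, outer]
  rw [← sum_pow_four (fun p q : Fin n → ZMod 2 => Weyl 2 n x p q * (ψ q * conj (ψ p)))]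
  refine Finset.sum_congr rfl fun P _ => Finset.sum_congr rfl fun Q _ => ?_
  rw [← Finset.prod_mul_distrib]

lemma trace_bell (ψ : (Fin n → ZMod 2) → ℂ)
    (a : (Fin n → ZMod 2) × (Fin n → ZMod 2)) :
    (BellDiff n a * outer4 n ψ).trace
      = ((2:ℂ)^(2*n))⁻¹ * ∑ x : (Fin n → ZMod 2) × (Fin n → ZMod 2),
          (sg (dz a.1 x.2) * sg (dz a.2 x.1)) *
            ((Weyl 2 n x * outer 2 n ψ).trace) ^ 4 := by
  rw [BellDiff, Matrix.smul_mul, Matrix.sum_mul, Matrix.trace_smul, Matrix.trace_sum,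
    smul_eq_mul]
  congr 1
  refine Finset.sum_congr rfl fun x _ => ?_
  rw [Matrix.smul_mul, Matrix.trace_smul, smul_eq_mul, trace_pow4, sg_symp]

end Core

lemma pdist_eq {n : ℕ} (ψ : (Fin n → ZMod 2) → ℂ)
    (x : (Fin n → ZMod 2) × (Fin n → ZMod 2)) :
    ((pdist 2 n ψ x : ℝ) : ℂ) = ((2:ℂ)^n)⁻¹ * GC ψ x := by
  rw [pdist, traceW, norm_mul, abs_I_zpow, one_mul, Complex.sq_norm]
  push_cast
  rw [GC, Complex.mul_conj]

/-- Bell difference sampling: for any pure `n`-qubit state `ψ`,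
`tr(Π_a ψ^{⊗4}) = ∑_x p_ψ(x) p_ψ(x + a)`. -/
theorem stmt11 (n : ℕ) (ψ : (Fin n → ZMod 2) → ℂ) (hψ : dotc ψ ψ = 1)
    (a : (Fin n → ZMod 2) × (Fin n → ZMod 2)) :
    (BellDiff n a * outer4 n ψ).trace =
      ((∑ x : ((Fin n → ZMod 2) × (Fin n → ZMod 2)),
        pdist 2 n ψ x * pdist 2 n ψ (x + a) : ℝ) : ℂ) := by
  classical
  rw [trace_bell]
  simp_rw [trace4]
  rw [← conv_eq]
  have h2 : ((2:ℂ)^(2*n))⁻¹ = ((2:ℂ)^n)⁻¹ * ((2:ℂ)^n)⁻¹ := by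
    rw [two_mul, pow_add, mul_inv]
  have hterm : ∀ x : (Fin n → ZMod 2) × (Fin n → ZMod 2),
      ((pdist 2 n ψ x * pdist 2 n ψ (x + a) : ℝ) : ℂ)
        = ((2:ℂ)^(2*n))⁻¹ * (GC ψ x * GC ψ (x + a)) := by
    intro x
    rw [Complex.ofReal_mul, pdist_eq, pdist_eq, h2]
    ring
  push_cast
  simp_rw [← Complex.ofReal_mul, hterm, ← Finset.mul_sum]
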